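/- arXiv:1512.08168 — 2 statements merged into one kernel-verified Lean document; each statement's English description precedes it below -/
import Mathlib

section
/- Let w be a fixed word listing all letters of Σ, and let NS_w be the set of words not having w as a prefix. For any language L ⊆ Σ*, L = Σ* if and only if wL ∪ NS_w ⊇ P_Σ, where wL = {w·u | u ∈ L} and P_Σ is the set of pangrams. -/
theorem universality_iff_pangram_cover_general (A : Type)
    (w : List A) (hw : ∀ a : A, a ∈ w) (L : Set (List A)) :
    L = Set.univ ↔
      {x : List A | ∀ a : A, a ∈ x} ⊆
        {x : List A | ∃ u ∈ L, x = w ++ u} ∪ {x : List A | ¬ w <+: x} := by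
  constructor
  · rintro rfl x -
    by_cases hprefix : w <+: x
    · obtain ⟨u, rfl⟩ := hprefix
      exact Or.inl ⟨u, trivial, rfl⟩
    · exact Or.inr hprefix
  · intro hcover
    refine Set.eq_univ_of_forall fun u => ?_
    -- `w ++ u` is a pangram with prefix `w`, so the cover can only place it in `wL`.
    have hpangram : ∀ a, a ∈ w ++ u := fun a => List.mem_append_left u (hw a)
    rcases hcover hpangram with ⟨v, hv, heq⟩ | hnotPrefix
    · rwa [List.append_cancel_left heq]
    · exact absurd (List.prefix_append w u) hnotPrefix

theorem universality_iff_pangram_cover (A : Type) [Fintype A]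
    (w : List A) (hw : ∀ a : A, a ∈ w) (L : Set (List A)) :
    L = Set.univ ↔
      {x : List A | ∀ a : A, a ∈ x} ⊆
        {x : List A | ∃ u ∈ L, x = w ++ u} ∪ {x : List A | ¬ w <+: x} :=
  universality_iff_pangram_cover_general A w hw L
end

section
/- Given a finite set Σ and a set C ⊆ Σ³ of betweenness constraints, define F = {acb, cab, bac, bca | (a,b,c) ∈ C} as a set of forbidden length-3 subsequences. Then there exists a strict total order < on Σ satisfying every constraint (a,b,c) ∈ C (i.e., a < b < c or c < b < a) if and only if there exists a perfect pangram over Σ containing no element of F as a subsequence. -/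
/-! A strict total order on `Σ` and the perfect pangram listing `Σ` in increasing order determine
each other. In a sorted list of distinct elements a triple is a subsequence exactly when it is
increasing, so the four forbidden patterns for `(a, b, c)` are exactly the orderings of `a, b, c`
in which `b` is not in the middle. -/

open List

theorem List.forall_count_eq_one_iff {α : Type*} [DecidableEq α] {w : List α} :
    (∀ a, w.count a = 1) ↔ w.Nodup ∧ ∀ a, a ∈ w := by
  refine ⟨fun h => ⟨nodup_iff_count_le_one.2 fun a => (h a).le,
    fun a => count_pos_iff.1 (by rw [h a]; exact Nat.one_pos)⟩, fun ⟨hnd, hmem⟩ a =>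
    count_eq_one_of_mem hnd (hmem a)⟩

theorem List.Nodup.pairwise_idxOf_lt {α : Type*} [DecidableEq α] {w : List α} (hw : w.Nodup) :
    w.Pairwise (fun x y => w.idxOf x < w.idxOf y) :=
  pairwise_iff_getElem.2 fun i j hi hj hij => by simpa [hw.idxOf_getElem] using hij

section LinearOrder

variable {α : Type*} [LinearOrder α]

def Between (a b c : α) : Prop := a < b ∧ b < c ∨ c < b ∧ b < a

variable {w : List α}

theorem List.Pairwise.sublist_iff_subset_and_pairwise {l : List α} (hw : w.Pairwise (· < ·)) :
    l <+ w ↔ l ⊆ w ∧ l.Pairwise (· < ·) :=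
  ⟨fun h => ⟨h.subset, hw.sublist h⟩, fun ⟨hsub, hl⟩ =>
    sublist_of_subperm_of_pairwise (subperm_of_subset hl.nodup hsub) hl hw⟩

theorem List.Pairwise.triple_sublist_iff (hw : w.Pairwise (· < ·)) {x y z : α}
    (hx : x ∈ w) (hy : y ∈ w) (hz : z ∈ w) : [x, y, z] <+ w ↔ x < y ∧ y < z := by
  rw [hw.sublist_iff_subset_and_pairwise]
  simp only [cons_subset, nil_subset, pairwise_cons, mem_cons, not_mem_nil, Pairwise.nil]
  grind

theorem List.Pairwise.between_iff_not_sublist (hw : w.Pairwise (· < ·)) {a b c : α}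
    (ha : a ∈ w) (hb : b ∈ w) (hc : c ∈ w) (hab : a ≠ b) (hbc : b ≠ c) (hac : a ≠ c) :
    Between a b c ↔
      ¬[a, c, b] <+ w ∧ ¬[c, a, b] <+ w ∧ ¬[b, a, c] <+ w ∧ ¬[b, c, a] <+ w := by
  simp only [hw.triple_sublist_iff, ha, hb, hc]
  grind [Between]

end LinearOrder

theorem betweenness_iff_perfect_pangram (A : Type) [Fintype A] [DecidableEq A]
    (C : Set (A × A × A))
    (hC : ∀ t ∈ C, t.1 ≠ t.2.1 ∧ t.2.1 ≠ t.2.2 ∧ t.1 ≠ t.2.2) :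
    (∃ r : A → A → Prop, IsStrictTotalOrder A r ∧
        ∀ t ∈ C, (r t.1 t.2.1 ∧ r t.2.1 t.2.2) ∨ (r t.2.2 t.2.1 ∧ r t.2.1 t.1)) ↔
      ∃ w : List A, (∀ a : A, w.count a = 1) ∧
        ∀ t ∈ C,
          ¬ [t.1, t.2.2, t.2.1].Sublist w ∧
          ¬ [t.2.2, t.1, t.2.1].Sublist w ∧
          ¬ [t.2.1, t.1, t.2.2].Sublist w ∧
          ¬ [t.2.1, t.2.2, t.1].Sublist w := by
  simp only [List.forall_count_eq_one_iff]
  constructor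
  · rintro ⟨r, hr, hbetween⟩
    classical
    let := linearOrderOfSTO r
    have hsorted := (Finset.univ.sortedLT_sort (α := A)).pairwise
    refine ⟨Finset.univ.sort (· ≤ ·), ⟨Finset.sort_nodup _ _, by simp⟩, fun t ht => ?_⟩
    obtain ⟨hab, hbc, hac⟩ := hC t ht
    exact (hsorted.between_iff_not_sublist (by simp) (by simp) (by simp) hab hbc hac).1
      (hbetween t ht)
  · rintro ⟨w, ⟨hnodup, hmem⟩, hforbidden⟩
    let : LinearOrder A := LinearOrder.lift' w.idxOf fun x y => (List.idxOf_inj (hmem x)).1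
    refine ⟨(· < ·), inferInstance, fun t ht => ?_⟩
    obtain ⟨hab, hbc, hac⟩ := hC t ht
    exact (hnodup.pairwise_idxOf_lt.between_iff_not_sublist (hmem _) (hmem _) (hmem _)
      hab hbc hac).2 (hforbidden t ht)
end
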